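/- The preference P_h : xz ≻ x ≻ z' ≻ z ≻ ∅, where x_D ≠ z_D = z'_D and feasible sets contain at most one contract per doctor, is bilaterally substitutable but not pseudo-substitutable: no sub-preference of P_h is substitutable. -/

import Mathlib

inductive Ctr | x | z | z'
  deriving DecidableEq

open Ctr

/-- Doctors: `x_D ≠ z_D = z'_D`. -/
def doc : Ctr → Fin 2
  | x => 0
  | z => 1
  | z' => 1

/-- Choice function of `P_h : xz ≻ x ≻ z' ≻ z ≻ ∅` (on any input it selects the best
feasible subset, feasible sets having at most one contract per doctor). -/
def CP (S : Finset Ctr) : Finset Ctr :=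
  if x ∈ S ∧ z ∈ S then {x, z}
  else if x ∈ S then {x}
  else if z' ∈ S then {z'}
  else if z ∈ S then {z}
  else ∅

def Substitutable (C : Finset Ctr → Finset Ctr) : Prop :=
  ∀ (S : Finset Ctr) (w w' : Ctr), w ∈ S → w' ∈ S → w ≠ w' → w' ∈ C S → w' ∈ C (S.erase w)

def Consistent (C : Finset Ctr → Finset Ctr) : Prop :=
  ∀ S T : Finset Ctr, C S ⊆ T → T ⊆ S → C T = C S

def SubPref (C' C : Finset Ctr → Finset Ctr) : Prop :=
  (∀ S : Finset Ctr, C' S = S → C S = S) ∧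
  (∀ (S : Finset Ctr) (w : Ctr), C' S = S → w ∉ S → w ∈ C (insert w S) → w ∈ C' (insert w S))

def BilateralSubstitutable (C : Finset Ctr → Finset Ctr) : Prop :=
  ¬ ∃ (w c : Ctr) (Y : Finset Ctr),
      doc w ∉ Y.image doc ∧ doc c ∉ Y.image doc ∧
      c ∉ C (insert c Y) ∧ c ∈ C (insert c (insert w Y))

/- A sub-preference Q of P_h must choose exactly as P_h on pairs: {x} from {x, z'}, {z'} from
{z, z'} and {x, z} from {x, z}. If Q were substitutable, z' would not be chosen from {x, z, z'}
(else it would be chosen from {x, z'}), so consistency gives Q {x, z, z'} = Q {x, z} = {x, z};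
removing x would then leave z chosen from {z, z'}. -/

instance : Fintype Ctr := ⟨{x, z, z'}, fun a => by cases a <;> decide⟩

theorem CP_bilateralSubstitutable : BilateralSubstitutable CP := by
  unfold BilateralSubstitutable
  decide

section SubPref

variable {Q C : Finset Ctr → Finset Ctr}

theorem eq_pair_of_mem_of_mem (hQ : ∀ S, Q S ⊆ S) {a b : Ctr}
    (ha : a ∈ Q {a, b}) (hb : b ∈ Q {a, b}) : Q {a, b} = {a, b} :=
  (hQ _).antisymm (Finset.insert_subset ha (Finset.singleton_subset_iff.mpr hb))

theorem SubPref.eq_singleton (hQ : ∀ S, Q S ⊆ S) (hQC : SubPref Q C) {w : Ctr}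
    (hw : w ∈ C {w}) : Q {w} = {w} := by
  have hQ0 : Q ∅ = ∅ := Finset.subset_empty.mp (hQ ∅)
  have hw' : w ∈ Q {w} := hQC.2 ∅ w hQ0 (Finset.notMem_empty w) hw
  exact (hQ _).antisymm (Finset.singleton_subset_iff.mpr hw')

theorem SubPref.mem_pair (hQ : ∀ S, Q S ⊆ S) (hQC : SubPref Q C) {a b : Ctr}
    (hab : a ≠ b) (hb : b ∈ C {b}) (ha : a ∈ C {a, b}) : a ∈ Q {a, b} :=
  hQC.2 {b} a (hQC.eq_singleton hQ hb) (Finset.notMem_singleton.mpr hab) ha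

theorem SubPref.notMem_pair (hQ : ∀ S, Q S ⊆ S) (hQC : SubPref Q C) {a b : Ctr}
    (hC : C {a, b} ≠ {a, b}) (ha : a ∈ Q {a, b}) : b ∉ Q {a, b} :=
  fun hb => hC (hQC.1 _ (eq_pair_of_mem_of_mem hQ ha hb))

end SubPref

section SubPrefCP

variable {Q : Finset Ctr → Finset Ctr}

theorem SubPref.CP_x_mem_xz' (hQ : ∀ S, Q S ⊆ S) (hQC : SubPref Q CP) : x ∈ Q {x, z'} :=
  hQC.mem_pair hQ (by decide) (by decide) (by decide)

theorem SubPref.CP_z'_notMem_xz' (hQ : ∀ S, Q S ⊆ S) (hQC : SubPref Q CP) : z' ∉ Q {x, z'} :=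
  hQC.notMem_pair hQ (by decide) (hQC.CP_x_mem_xz' hQ)

theorem SubPref.CP_z'_mem_z'z (hQ : ∀ S, Q S ⊆ S) (hQC : SubPref Q CP) : z' ∈ Q {z', z} :=
  hQC.mem_pair hQ (by decide) (by decide) (by decide)

theorem SubPref.CP_z_notMem_z'z (hQ : ∀ S, Q S ⊆ S) (hQC : SubPref Q CP) : z ∉ Q {z', z} :=
  hQC.notMem_pair hQ (by decide) (hQC.CP_z'_mem_z'z hQ)

theorem SubPref.CP_eq_xz (hQ : ∀ S, Q S ⊆ S) (hQC : SubPref Q CP) : Q {x, z} = {x, z} := by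
  have hx : x ∈ Q {x, z} := hQC.mem_pair hQ (by decide) (by decide) (by decide)
  have hz : z ∈ Q {z, x} := hQC.mem_pair hQ (by decide) (by decide) (by decide)
  rw [Finset.pair_comm] at hz
  exact eq_pair_of_mem_of_mem hQ hx hz

theorem SubPref.CP_not_substitutable (hQ : ∀ S, Q S ⊆ S)
    (hcons : Consistent Q) (hQC : SubPref Q CP) : ¬ Substitutable Q := by
  intro hsubst
  have hz' : z' ∉ Q {x, z, z'} := fun h => by
    have h' := hsubst {x, z, z'} z z' (by decide) (by decide) (by decide) h
    rw [show ({x, z, z'} : Finset Ctr).erase z = {x, z'} by decide] at h'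
    exact hQC.CP_z'_notMem_xz' hQ h'
  have hxz : Q {x, z, z'} = {x, z} := by
    have hsubset : Q {x, z, z'} ⊆ {x, z} := by
      have h' := Finset.subset_erase.mpr ⟨hQ {x, z, z'}, hz'⟩
      rwa [show ({x, z, z'} : Finset Ctr).erase z' = {x, z} by decide] at h'
    rw [← hQC.CP_eq_xz hQ]
    exact (hcons _ _ hsubset (by decide)).symm
  have hz : z ∈ Q {z', z} := by
    have h' := hsubst {x, z, z'} x z (by decide) (by decide) (by decide) (by rw [hxz]; decide)
    rwa [show ({x, z, z'} : Finset Ctr).erase x = {z', z} by decide] at h'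
  exact hQC.CP_z_notMem_z'z hQ hz

end SubPrefCP

/-- `P_h : xz ≻ x ≻ z' ≻ z ≻ ∅` is bilaterally substitutable but not
pseudo-substitutable: no (preference-induced, hence consistent) sub-preference of
`P_h` is substitutable. -/
theorem CP_bilateral_not_pseudo :
    BilateralSubstitutable CP ∧
    ∀ Q : Finset Ctr → Finset Ctr,
      (∀ S : Finset Ctr, Q S ⊆ S) → Consistent Q → SubPref Q CP →
      ¬ Substitutable Q :=
  ⟨CP_bilateralSubstitutable, fun _ hQ hcons hQC => hQC.CP_not_substitutable hQ hcons⟩
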